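/- Let X ∈ ℝ^{n×p} have ℓ2-normalized columns and coherence μ. Let T₀ ⊆ {1,…,p} with |T₀| = s₀, let λ₁ ≥ ⋯ ≥ λ_{s₀} be the eigenvalues of X_{T₀}ᵗX_{T₀}, and let λ̃₁ ≥ λ₁ and 0 < λ̃_{s₀} ≤ λ_{s₀}. Let T₁ ⊆ {1,…,p} with |T₁| = 3·s₀ and T₀ ∩ T₁ = ∅. Define ε_min = (1/4)·( ((1/4)·s₀³·μ² + s₀^{3/2}·μ) / (1 − s₀·μ² − 1/2) ) and ε_max = (1/4)·( (144·s₀⁴·μ² + 32·s₀^{3/2}·μ·(3/2)²) / (λ̃₁ − 1) ). Assume: (1) 1 − 4·s₀·μ > λ̃_{s₀} > 1/2; (2) 1 < λ̃₁ < 3/2; (3) 3·s₀ < min( (λ̃_{s₀} − 1/2)/ε_min , (3/2 − λ̃₁)/ε_max ); and (4) μ ≤ min{ 1/√(288·s₀^{5/2}·(2·s₀^{3/2}+1)), 1/√((3/2)·s₀⁴ + 6·s₀^{5/2} + 2·s₀) }. Then λ₁(X_{T₀∪T₁}ᵗX_{T₀∪T₁}) ≤ λ̃₁ + 3·s₀·ε_max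 and λ_{4s₀}(X_{T₀∪T₁}ᵗX_{T₀∪T₁}) ≥ λ̃_{s₀} − 3·s₀·ε_min. -/

import Mathlib

open Matrix

/-- The submatrix of `X` made of the columns indexed by `T`. -/
noncomputable def subCols {n p : ℕ} (X : Matrix (Fin n) (Fin p) ℝ) (T : Finset (Fin p)) :
    Matrix (Fin n) {j // j ∈ T} ℝ :=
  X.submatrix id (fun t => (t : Fin p))

/-- The Gram matrix `X_Tᵗ X_T`. -/
noncomputable def gram {n p : ℕ} (X : Matrix (Fin n) (Fin p) ℝ) (T : Finset (Fin p)) :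
    Matrix {j // j ∈ T} {j // j ∈ T} ℝ :=
  (subCols X T)ᴴ * subCols X T

theorem gram_isHermitian {n p : ℕ} (X : Matrix (Fin n) (Fin p) ℝ) (T : Finset (Fin p)) :
    (gram X T).IsHermitian :=
  Matrix.isHermitian_conjTranspose_mul_self _

/-!
Every eigenvalue of `X_Tᵗ X_T` lies within `(|T| - 1) μ` of `1` by Gershgorin's theorem, since the
Gram matrix has unit diagonal and off-diagonal entries bounded by the coherence. With `|T₀ ∪ T₁| ≤ 4 s₀`
this window `[1 - 4 s₀ μ, 1 + 4 s₀ μ]` already sits inside the claimed one: hypothesis (1) puts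
`λ̃_{s₀}` below its left end, (3) forces `ε_min > 0`, and the formula for `ε_max` together with
`1 < λ̃₁ < 3/2` gives `ε_max ≥ 36 s₀ μ`.
-/

open Finset

namespace Matrix.IsHermitian

variable {ι : Type*} [Fintype ι] [DecidableEq ι] {A : Matrix ι ι ℝ}

theorem exists_abs_eigenvalues_sub_diag_le (hA : A.IsHermitian) (i : ι) :
    ∃ k, |hA.eigenvalues i - A k k| ≤ ∑ j ∈ univ.erase k, |A k j| := by
  have hev : Module.End.HasEigenvalue (toLin' A) (hA.eigenvalues i) :=
    .of_mem_spectrum <| (spectrum_toLin' A).symm ▸ hA.eigenvalues_mem_spectrum_real i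
  simpa [Real.dist_eq] using eigenvalue_mem_ball hev

theorem abs_eigenvalues_sub_le_of_offDiag_le (hA : A.IsHermitian) {d μ : ℝ}
    (hdiag : ∀ k, A k k = d) (hoff : ∀ k j, k ≠ j → |A k j| ≤ μ) (i : ι) :
    |hA.eigenvalues i - d| ≤ (Fintype.card ι - 1 : ℝ) * μ := by
  obtain ⟨k, hk⟩ := hA.exists_abs_eigenvalues_sub_diag_le i
  have : Nonempty ι := ⟨i⟩
  calc |hA.eigenvalues i - d| ≤ ∑ j ∈ univ.erase k, |A k j| := hdiag k ▸ hk
    _ ≤ ∑ _j ∈ univ.erase k, μ := sum_le_sum fun j hj => hoff k j (ne_of_mem_erase hj).symm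
    _ = (Fintype.card ι - 1 : ℝ) * μ := by
      rw [sum_const, card_erase_of_mem (mem_univ k), card_univ, nsmul_eq_mul,
        Nat.cast_pred Fintype.card_pos]

end Matrix.IsHermitian

theorem gram_apply {n p : ℕ} (X : Matrix (Fin n) (Fin p) ℝ) (T : Finset (Fin p))
    (a b : {j // j ∈ T}) : gram X T a b = ∑ i, X i a * X i b := by
  simp [_root_.gram, subCols, mul_apply]

theorem abs_eigenvalues_gram_sub_one_le {n p : ℕ} {X : Matrix (Fin n) (Fin p) ℝ} {μ : ℝ}
    (hcols : ∀ j, ∑ i, (X i j) ^ 2 = 1) (hcoh : ∀ k l, k ≠ l → |∑ i, X i k * X i l| ≤ μ)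
    (T : Finset (Fin p)) (i : {j // j ∈ T}) :
    |(gram_isHermitian X T).eigenvalues i - 1| ≤ (#T - 1 : ℝ) * μ := by
  have hdiag (k : {j // j ∈ T}) : gram X T k k = 1 := by
    simpa [gram_apply, sq] using hcols k
  have hoff (k j : {j // j ∈ T}) (hkj : k ≠ j) : |gram X T k j| ≤ μ :=
    gram_apply X T k j ▸ hcoh k j (Subtype.coe_ne_coe.mpr hkj)
  simpa using (gram_isHermitian X T).abs_eigenvalues_sub_le_of_offDiag_le hdiag hoff i

noncomputable def epsMax (s : ℕ) (μ t : ℝ) : ℝ :=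
  (1 / 4) * ((144 * (s : ℝ) ^ 4 * μ ^ 2 + 32 * ((s : ℝ) * Real.sqrt s) * μ * (3 / 2) ^ 2) / (t - 1))

theorem mul_le_epsMax {s : ℕ} {μ t : ℝ} (hμ : 0 ≤ μ) (ht₁ : 1 < t) (ht₂ : t < 3 / 2) :
    36 * s * μ ≤ epsMax s μ t := by
  have hs : (s : ℝ) ≤ s * Real.sqrt s := by
    rcases Nat.eq_zero_or_pos s with rfl | hpos
    · simp
    · exact le_mul_of_one_le_right s.cast_nonneg (Real.one_le_sqrt.mpr (by exact_mod_cast hpos))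
  rw [epsMax, ← mul_div_assoc, le_div_iff₀ (by linarith)]
  nlinarith [mul_nonneg (mul_nonneg s.cast_nonneg hμ) (sub_nonneg.mpr ht₂.le),
    mul_le_mul_of_nonneg_right hs hμ, (by positivity : (0 : ℝ) ≤ s ^ 4 * μ ^ 2)]

theorem successive_perturbation_specialized_general
    {n p : ℕ} (X : Matrix (Fin n) (Fin p) ℝ) (μ : ℝ) (s₀ : ℕ)
    (hcols : ∀ j, ∑ i, (X i j) ^ 2 = 1)
    (hμ0 : 0 ≤ μ)
    (hcoh : ∀ k l, k ≠ l → |∑ i, X i k * X i l| ≤ μ)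
    (T₀ T₁ : Finset (Fin p)) (hT₀ : T₀.card = s₀) (hT₁ : T₁.card = 3 * s₀)
    (tlam1 tlams : ℝ)
    (εmin εmax : ℝ)
    (hεmax : εmax = (1 / 4) * ((144 * (s₀ : ℝ) ^ 4 * μ ^ 2 +
        32 * ((s₀ : ℝ) * Real.sqrt s₀) * μ * (3 / 2) ^ 2) / (tlam1 - 1)))
    (h1a : tlams < 1 - 4 * (s₀ : ℝ) * μ) (h1b : (1 : ℝ) / 2 < tlams)
    (h2a : 1 < tlam1) (h2b : tlam1 < 3 / 2)
    (h3 : 3 * (s₀ : ℝ) < min ((tlams - 1 / 2) / εmin) ((3 / 2 - tlam1) / εmax)) :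
    ∀ i, tlams - 3 * (s₀ : ℝ) * εmin ≤ (gram_isHermitian X (T₀ ∪ T₁)).eigenvalues i ∧
      (gram_isHermitian X (T₀ ∪ T₁)).eigenvalues i ≤ tlam1 + 3 * (s₀ : ℝ) * εmax := by
  intro i
  have hcard : (#(T₀ ∪ T₁) : ℝ) ≤ 4 * s₀ := by
    exact_mod_cast (card_union_le T₀ T₁).trans (by omega)
  have hball : |(gram_isHermitian X (T₀ ∪ T₁)).eigenvalues i - 1| ≤ 4 * s₀ * μ :=
    (abs_eigenvalues_gram_sub_one_le hcols hcoh (T₀ ∪ T₁) i).trans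
      (mul_le_mul_of_nonneg_right (by linarith) hμ0)
  have hεmin : 0 < εmin := by
    by_contra! h
    have := div_nonpos_of_nonneg_of_nonpos (by linarith : 0 ≤ tlams - 1 / 2) h
    linarith [h3.trans_le (min_le_left _ _), s₀.cast_nonneg (α := ℝ)]
  have hεmax_ge : 4 * s₀ * μ ≤ 3 * s₀ * εmax := by
    have hs₀ : (s₀ : ℝ) ≤ s₀ * s₀ := by exact_mod_cast Nat.le_mul_self s₀
    have h36 : 36 * s₀ * μ ≤ εmax := hεmax ▸ mul_le_epsMax hμ0 h2a h2b
    nlinarith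
  have hεmin_term : 0 ≤ 3 * s₀ * εmin := by positivity
  rw [abs_le] at hball
  exact ⟨by linarith, by linarith⟩

/-- **Successive perturbations, specialization `η = 1/2`, `s₁ = 3 s₀`.**
Under the stated assumptions, `λ₁(X_{T₀∪T₁}ᵗX_{T₀∪T₁}) ≤ λ̃₁ + 3 s₀ ε_max` and
`λ_{4s₀}(X_{T₀∪T₁}ᵗX_{T₀∪T₁}) ≥ λ̃_{s₀} − 3 s₀ ε_min`. -/
theorem successive_perturbation_specialized
    {n p : ℕ} (X : Matrix (Fin n) (Fin p) ℝ) (μ : ℝ) (s₀ : ℕ)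
    (hcols : ∀ j, ∑ i, (X i j) ^ 2 = 1)
    (hμ0 : 0 ≤ μ)
    (hcoh : ∀ k l, k ≠ l → |∑ i, X i k * X i l| ≤ μ)
    (T₀ T₁ : Finset (Fin p)) (hT₀ : T₀.card = s₀) (hT₁ : T₁.card = 3 * s₀)
    (hdisj : Disjoint T₀ T₁)
    (tlam1 tlams : ℝ)
    (hup : ∀ i, (gram_isHermitian X T₀).eigenvalues i ≤ tlam1)
    (hdown : ∀ i, tlams ≤ (gram_isHermitian X T₀).eigenvalues i)
    (htpos : 0 < tlams)
    (εmin εmax : ℝ)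
    (hεmin : εmin = (1 / 4) * (((1 / 4) * (s₀ : ℝ) ^ 3 * μ ^ 2 +
        (s₀ : ℝ) * Real.sqrt s₀ * μ) / (1 - (s₀ : ℝ) * μ ^ 2 - 1 / 2)))
    (hεmax : εmax = (1 / 4) * ((144 * (s₀ : ℝ) ^ 4 * μ ^ 2 +
        32 * ((s₀ : ℝ) * Real.sqrt s₀) * μ * (3 / 2) ^ 2) / (tlam1 - 1)))
    (h1a : tlams < 1 - 4 * (s₀ : ℝ) * μ) (h1b : (1 : ℝ) / 2 < tlams)
    (h2a : 1 < tlam1) (h2b : tlam1 < 3 / 2)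
    (h3 : 3 * (s₀ : ℝ) < min ((tlams - 1 / 2) / εmin) ((3 / 2 - tlam1) / εmax))
    (hμsmall : μ ≤ min
      (1 / Real.sqrt (288 * ((s₀ : ℝ) ^ 2 * Real.sqrt s₀) * (2 * ((s₀ : ℝ) * Real.sqrt s₀) + 1)))
      (1 / Real.sqrt ((3 / 2) * (s₀ : ℝ) ^ 4 + 6 * ((s₀ : ℝ) ^ 2 * Real.sqrt s₀) + 2 * s₀))) :
    ∀ i, tlams - 3 * (s₀ : ℝ) * εmin ≤ (gram_isHermitian X (T₀ ∪ T₁)).eigenvalues i ∧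
      (gram_isHermitian X (T₀ ∪ T₁)).eigenvalues i ≤ tlam1 + 3 * (s₀ : ℝ) * εmax :=
  successive_perturbation_specialized_general X μ s₀ hcols hμ0 hcoh T₀ T₁ hT₀ hT₁ tlam1 tlams εmin
    εmax hεmax h1a h1b h2a h2b h3
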